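/- Let M = {E·C : C ∈ R^{M×C}} with EᵀE = I_M, and let A ∈ R^{N×N} be symmetric with A·E = E·Λ for some matrix Λ (so the column space of E is A-invariant). If every eigenvalue of A restricted to the orthogonal complement of the column space of E has absolute value at most λ, then d_M(A·H) ≤ λ·d_M(H) for every H ∈ R^{N×C}. -/
import Mathlib


open Matrix

/-- Frobenius norm of a real matrix. -/
noncomputable def fro {n m : ℕ} (X : Matrix (Fin n) (Fin m) ℝ) : ℝ :=
  Real.sqrt (∑ i, ∑ j, (X i j) ^ 2)

/-- Euclidean norm of a real vector. -/
noncomputable def en {n : ℕ} (x : Fin n → ℝ) : ℝ :=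
  Real.sqrt (∑ i, (x i) ^ 2)

/-- Frobenius distance from `X` to the subspace `{E * C}`. -/
noncomputable def dM {N M C : ℕ} (E : Matrix (Fin N) (Fin M) ℝ)
    (X : Matrix (Fin N) (Fin C) ℝ) : ℝ :=
  ⨅ Y : Matrix (Fin M) (Fin C) ℝ, fro (X - E * Y)

lemma en_nonneg {n : ℕ} (x : Fin n → ℝ) : 0 ≤ en x := Real.sqrt_nonneg _

lemma en_sq {n : ℕ} (x : Fin n → ℝ) : en x ^ 2 = ∑ i, (x i) ^ 2 := by
  rw [en, Real.sq_sqrt]; positivity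

lemma col_mul {N C : ℕ} (A : Matrix (Fin N) (Fin N) ℝ)
    (X : Matrix (Fin N) (Fin C) ℝ) (j : Fin C) :
    (fun i => (A * X) i j) = A *ᵥ (fun i => X i j) := by
  funext i
  simp [Matrix.mul_apply, Matrix.mulVec, dotProduct]

/-- If `A` is symmetric, leaves the column space of `E` invariant (`A·E = E·Λ`), and
acts with spectral bound `λ` on the orthogonal complement of that column space, then
`d_M(A·H) ≤ λ·d_M(H)`. -/
theorem dist_mul_left_le {N M C : ℕ} (E : Matrix (Fin N) (Fin M) ℝ)
    (hE : Eᵀ * E = 1)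
    (A : Matrix (Fin N) (Fin N) ℝ) (hA : A = Aᵀ)
    (Λ : Matrix (Fin M) (Fin M) ℝ) (hAE : A * E = E * Λ)
    (lam : ℝ) (hlam : 0 ≤ lam)
    (hspec : ∀ v : Fin N → ℝ, Eᵀ *ᵥ v = 0 → en (A *ᵥ v) ≤ lam * en v)
    (H : Matrix (Fin N) (Fin C) ℝ) :
    dM E (A * H) ≤ lam * dM E H := by
  have hbdd : ∀ X : Matrix (Fin N) (Fin C) ℝ,
      BddBelow (Set.range fun Y : Matrix (Fin M) (Fin C) ℝ => fro (X - E * Y)) := by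
    intro X
    refine ⟨0, ?_⟩
    rintro _ ⟨Y, rfl⟩
    exact Real.sqrt_nonneg _
  have key : ∀ Y : Matrix (Fin M) (Fin C) ℝ,
      dM E (A * H) ≤ lam * fro (H - E * Y) := by
    intro Y
    set R : Matrix (Fin N) (Fin C) ℝ := H - E * Y with hR
    set S : Matrix (Fin N) (Fin C) ℝ := E * (Eᵀ * R) with hS
    set Rp : Matrix (Fin N) (Fin C) ℝ := R - S with hRp
    have hEtRp : Eᵀ * Rp = 0 := by
      rw [hRp, Matrix.mul_sub, hS, ← Matrix.mul_assoc, hE, Matrix.one_mul, sub_self]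
    have hcol : ∀ j : Fin C, Eᵀ *ᵥ (fun i => Rp i j) = 0 := by
      intro j
      funext k
      have h := congrFun (congrFun hEtRp k) j
      simpa [Matrix.mul_apply, Matrix.mulVec, dotProduct] using h
    have hrepr : A * H - E * (Λ * Y + Λ * (Eᵀ * R)) = A * Rp := by
      have h1 : E * (Λ * Y) = A * (E * Y) := by
        rw [← Matrix.mul_assoc, ← hAE, Matrix.mul_assoc]
      have h2 : E * (Λ * (Eᵀ * R)) = A * (E * (Eᵀ * R)) := by
        rw [← Matrix.mul_assoc, ← hAE, Matrix.mul_assoc]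
      have hH : H = R + E * Y := by rw [hR]; abel
      calc A * H - E * (Λ * Y + Λ * (Eᵀ * R))
          = A * (R + E * Y) - (A * (E * Y) + A * S) := by
            rw [Matrix.mul_add, h1, h2, ← hH, hS]
        _ = A * R - A * S := by rw [Matrix.mul_add]; abel
        _ = A * (R - S) := (Matrix.mul_sub A R S).symm
        _ = A * Rp := by rw [hRp]
    -- fro (A * Rp) ≤ lam * fro Rp
    have hb1 : fro (A * Rp) ≤ lam * fro Rp := by
      have hsum : ∑ i, ∑ j, ((A * Rp) i j) ^ 2 ≤ lam ^ 2 * ∑ i, ∑ j, (Rp i j) ^ 2 := by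
        calc ∑ i, ∑ j, ((A * Rp) i j) ^ 2
            = ∑ j, ∑ i, ((A * Rp) i j) ^ 2 := Finset.sum_comm
          _ ≤ ∑ j, lam ^ 2 * ∑ i, (Rp i j) ^ 2 := by
              apply Finset.sum_le_sum
              intro j _
              have h2 : en (A *ᵥ fun i => Rp i j) ≤ lam * en (fun i => Rp i j) :=
                hspec _ (hcol j)
              have e1 : ∑ i, ((A * Rp) i j) ^ 2 = en (A *ᵥ fun i => Rp i j) ^ 2 := by
                rw [en_sq]
                exact Finset.sum_congr rfl fun i _ => by
                  rw [congrFun (col_mul A Rp j) i]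
              have e2 : ∑ i, (Rp i j) ^ 2 = en (fun i => Rp i j) ^ 2 := (en_sq _).symm
              calc ∑ i, ((A * Rp) i j) ^ 2 = en (A *ᵥ fun i => Rp i j) ^ 2 := e1
                _ ≤ (lam * en (fun i => Rp i j)) ^ 2 := by
                    apply pow_le_pow_left₀ (en_nonneg _) h2
                _ = lam ^ 2 * en (fun i => Rp i j) ^ 2 := by ring
                _ = lam ^ 2 * ∑ i, (Rp i j) ^ 2 := by rw [e2]
          _ = lam ^ 2 * ∑ j, ∑ i, (Rp i j) ^ 2 := (Finset.mul_sum _ _ _).symm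
          _ = lam ^ 2 * ∑ i, ∑ j, (Rp i j) ^ 2 := by rw [Finset.sum_comm]
      rw [fro, fro, show lam * Real.sqrt (∑ i, ∑ j, (Rp i j) ^ 2)
          = Real.sqrt (lam ^ 2 * ∑ i, ∑ j, (Rp i j) ^ 2) by
        rw [Real.sqrt_mul (sq_nonneg lam), Real.sqrt_sq hlam]]
      exact Real.sqrt_le_sqrt hsum
    -- fro Rp ≤ fro R
    have hb2 : fro Rp ≤ fro R := by
      have hStRp : Sᵀ * Rp = 0 := by
        rw [hS, Matrix.transpose_mul, Matrix.mul_assoc, hEtRp, Matrix.mul_zero]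
      have cross : ∀ j : Fin C, ∑ i, S i j * Rp i j = 0 := by
        intro j
        have h := congrFun (congrFun hStRp j) j
        simpa [Matrix.mul_apply, Matrix.transpose_apply] using h
      apply Real.sqrt_le_sqrt
      have swap1 : ∑ i, ∑ j, (Rp i j) ^ 2 = ∑ j, ∑ i, (Rp i j) ^ 2 := Finset.sum_comm
      have swap2 : ∑ i, ∑ j, (R i j) ^ 2 = ∑ j, ∑ i, (R i j) ^ 2 := Finset.sum_comm
      rw [swap1, swap2]
      apply Finset.sum_le_sum
      intro j _
      have hRdecomp : ∀ i, R i j = S i j + Rp i j := by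
        intro i; simp [hRp]
      have expand : ∑ i, (R i j) ^ 2
          = ∑ i, (S i j) ^ 2 + 2 * (∑ i, S i j * Rp i j) + ∑ i, (Rp i j) ^ 2 := by
        rw [Finset.mul_sum, ← Finset.sum_add_distrib, ← Finset.sum_add_distrib]
        exact Finset.sum_congr rfl fun i _ => by rw [hRdecomp i]; ring
      have hSnn : 0 ≤ ∑ i, (S i j) ^ 2 := Finset.sum_nonneg fun i _ => sq_nonneg _
      rw [expand, cross j]
      linarith
    calc dM E (A * H) ≤ fro (A * H - E * (Λ * Y + Λ * (Eᵀ * R))) :=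
          ciInf_le (hbdd _) _
      _ = fro (A * Rp) := by rw [hrepr]
      _ ≤ lam * fro Rp := hb1
      _ ≤ lam * fro R := by
          exact mul_le_mul_of_nonneg_left hb2 hlam
      _ = lam * fro (H - E * Y) := by rw [hR]
  rw [show lam * dM E H = ⨅ Y : Matrix (Fin M) (Fin C) ℝ, lam * fro (H - E * Y) from
    Real.mul_iInf_of_nonneg hlam _]
  exact le_ciInf key
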